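/- Let G be a Hamiltonian cubic graph on n = 3k vertices, k ≥ 2, with vertices labeled by Z/nZ along a Hamiltonian cycle. Then G has a good shift; consequently G has a proportionally dense subgraph of size ⌊(2n+1)/3⌋ = 2k. -/

import Mathlib

open SimpleGraph

/-- Number of neighbors of `v` inside `T`. -/
noncomputable def degIn {W : Type*} (G : SimpleGraph W) (T : Set W) (v : W) : ℕ :=
  (T ∩ G.neighborSet v).ncard

/-- `G[S]` is a proportionally dense subgraph. -/
def IsPDS {W : Type*} (G : SimpleGraph W) (S : Set W) : Prop :=
  S ⊂ Set.univ ∧ 2 ≤ S.ncard ∧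
    ∀ u ∈ S, degIn G Sᶜ u * (S.ncard - 1) ≤ degIn G S u * Sᶜ.ncard

/-- The set `{u, u+1, …, u+(m-1)}` of `m` consecutive vertices on the Hamiltonian
cycle `(0, 1, …, n-1)`. -/
def arc (n : ℕ) (u : ZMod n) (m : ℕ) : Set (ZMod n) :=
  (fun j : ℕ => u + (j : ZMod n)) '' {j : ℕ | j < m}

/-- `P = {u, u+1, …, u-k'-1}` (that is, `arc n u (n-k')`) is a *shift* with
parameter `k'` (where `2 ≤ k' ≤ n-2`) if both of its endpoints have exactly two
neighbors inside `P`. -/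
def IsShift (n : ℕ) (G : SimpleGraph (ZMod n)) (k' : ℕ) (u : ZMod n) : Prop :=
  2 ≤ k' ∧ k' ≤ n - 2 ∧
    degIn G (arc n u (n - k')) u = 2 ∧
    degIn G (arc n u (n - k')) (u + ((n - k' - 1 : ℕ) : ZMod n)) = 2

/-! Let `c` be the chord map (the fixed-point-free involution sending a vertex to its third
neighbour) and `d u = (c u - u).val` the length of the chord at `u`. For `n = 3k` the arc of
`2k` vertices starting at `u` is a good shift iff `d u < 2k` and `k < d (u + 2k - 1)`. If no `u`
had both, `A = {u | d u < 2k}` would be closed under translation by `2k - 1`, hence under the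
cyclic subgroup it generates, which forces `d ≤ k` on `A`. Then `c` swaps `A` and its
complement, so `2 |A| = 3k`; but `|A|` is a multiple of the order of `2k - 1`, which is a
multiple of `k`. Finally, in any shift of at most `(2n + 1) / 3` vertices every vertex has at most
one neighbour outside, which makes it proportionally dense. -/

open Finset

theorem Finset.add_mem_of_mem_zmultiples {G : Type*} [AddGroup G] [Finite G] {A : Finset G}
    {g : G} (hA : ∀ a ∈ A, a + g ∈ A) {a h : G} (ha : a ∈ A)
    (hh : h ∈ AddSubgroup.zmultiples g) : a + h ∈ A := by
  obtain ⟨m, rfl⟩ := mem_multiples_iff_mem_zmultiples.mpr hh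
  clear hh
  induction m with
  | zero => simpa using ha
  | succ m ih => simpa [succ_nsmul, ← add_assoc] using hA _ ih

theorem AddSubgroup.card_dvd_card_of_add_mem {G : Type*} [AddCommGroup G] [Fintype G]
    [DecidableEq G] (H : AddSubgroup G) {A : Finset G} (hA : ∀ a ∈ A, ∀ h ∈ H, a + h ∈ A) :
    Nat.card H ∣ #A := by
  classical
  set π := QuotientAddGroup.mk' H
  have hfiber : ∀ q ∈ A.image π, #{a ∈ A | π a = q} = Nat.card H := by
    intro q hq
    obtain ⟨a₀, ha₀, rfl⟩ := mem_image.mp hq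
    calc #{a ∈ A | π a = π a₀} = #{g | π g = π a₀} := by
          congr 1
          ext g
          simp only [mem_filter, mem_univ, true_and, and_iff_right_iff_imp]
          intro hg
          have : -a₀ + g ∈ H := QuotientAddGroup.eq.mp hg.symm
          simpa using hA a₀ ha₀ _ this
      _ = #{g | π g = 0} :=
          AddMonoidHom.card_fiber_eq_of_mem_range π ⟨a₀, rfl⟩ ⟨0, map_zero π⟩
      _ = Nat.card H := by
          simp_rw [π, QuotientAddGroup.mk'_apply, QuotientAddGroup.eq_zero_iff]
          rw [Nat.card_eq_fintype_card, Fintype.card_subtype]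
  rw [card_eq_sum_card_fiberwise (fun a ha => mem_image_of_mem π ha), sum_congr rfl hfiber,
    sum_const, smul_eq_mul]
  exact dvd_mul_left _ _

theorem Finset.two_mul_card_eq_of_involutive {α : Type*} [Fintype α] [DecidableEq α]
    {A : Finset α} {f : α → α} (hf : Function.Involutive f) (hA : ∀ a, f a ∈ A ↔ a ∉ A) :
    2 * #A = Fintype.card α := by
  have himage : A.image f = Aᶜ := by
    ext b
    simp only [mem_image, mem_compl]
    constructor
    · rintro ⟨a, ha, rfl⟩
      exact (hA a).not.mpr (not_not.mpr ha)
    · exact fun hb => ⟨f b, (hA b).mpr hb, hf b⟩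
  have := card_compl A
  rw [← himage, card_image_of_injective A hf.injective] at this
  have := card_le_univ A
  omega

theorem ZMod.val_sub_comm {n : ℕ} [NeZero n] {x y : ZMod n} (h : x ≠ y) :
    (y - x).val = n - (x - y).val := by
  rw [← neg_sub, ZMod.neg_val, if_neg (sub_ne_zero.mpr h)]

theorem ZMod.dvd_addOrderOf_natCast_two_mul_sub_one {k : ℕ} (hk : 0 < k) :
    k ∣ addOrderOf ((2 * k - 1 : ℕ) : ZMod (3 * k)) := by
  have h3 : 3 • ((2 * k - 1 : ℕ) : ZMod (3 * k)) = -3 := by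
    have := ZMod.natCast_self (3 * k)
    rw [Nat.cast_sub (by omega)]
    push_cast at this ⊢
    linear_combination 2 * this
  have hord : addOrderOf (3 : ZMod (3 * k)) = k := by
    rw [show (3 : ZMod (3 * k)) = ((3 : ℕ) : ZMod (3 * k)) by norm_num,
      ZMod.addOrderOf_coe _ (by omega), Nat.gcd_mul_right_left]
    omega
  calc k = addOrderOf (3 • ((2 * k - 1 : ℕ) : ZMod (3 * k))) := by rw [h3, addOrderOf_neg, hord]
    _ ∣ _ := addOrderOf_smul_dvd _

theorem ZMod.exists_val_sub_lt_and_lt_val_sub {k : ℕ} (hk : 0 < k)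
    {c : ZMod (3 * k) → ZMod (3 * k)} (hc : Function.Involutive c) (hfix : ∀ i, c i ≠ i) :
    ∃ u : ZMod (3 * k), (c u - u).val < 2 * k ∧
      k < (c (u + (2 * k - 1 : ℕ)) - (u + (2 * k - 1 : ℕ))).val := by
  have : NeZero (3 * k) := ⟨by omega⟩
  by_contra! hno
  set t : ZMod (3 * k) := ((2 * k - 1 : ℕ) : ZMod (3 * k))
  set A : Finset (ZMod (3 * k)) := {u | (c u - u).val < 2 * k}
  have hmem : ∀ u, u ∈ A ↔ (c u - u).val < 2 * k := by simp [A]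
  have hAt : ∀ u ∈ A, u + t ∈ A := fun u hu =>
    (hmem _).mpr ((hno u ((hmem u).mp hu)).trans_lt (by omega))
  have hAle : ∀ u ∈ A, (c u - u).val ≤ k := fun u hu => by
    simpa using hno _ ((hmem _).mp (add_mem_of_mem_zmultiples hAt hu
      (AddSubgroup.neg_mem _ (AddSubgroup.mem_zmultiples t))))
  have hcA : ∀ u, c u ∈ A ↔ u ∉ A := fun u => by
    have := ZMod.val_sub_comm (hfix u)
    have := hAle u
    have := hAle (c u)
    rw [hmem, hmem, hc u] at *
    omega
  have hcard : 2 * #A = 3 * k := by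
    rw [two_mul_card_eq_of_involutive hc hcA, ZMod.card]
  obtain ⟨q, hq⟩ := (ZMod.dvd_addOrderOf_natCast_two_mul_sub_one hk).trans <| (Nat.card_zmultiples t) ▸
    (AddSubgroup.zmultiples t).card_dvd_card_of_add_mem
      (fun a ha h hh => add_mem_of_mem_zmultiples hAt ha hh)
  rw [hq] at hcard
  rcases q with _ | _ | q <;> nlinarith

section Arc

variable {n : ℕ}

theorem ncard_arc (u : ZMod n) {m : ℕ} (hm : m ≤ n) : (arc n u m).ncard = m := by
  have hinj : Set.InjOn (fun j : ℕ => u + (j : ZMod n)) {j | j < m} := by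
    intro a ha b hb hab
    have := congrArg ZMod.val (add_left_cancel hab)
    rwa [ZMod.val_natCast, ZMod.val_natCast, Nat.mod_eq_of_lt (lt_of_lt_of_le ha hm),
      Nat.mod_eq_of_lt (lt_of_lt_of_le hb hm)] at this
  rw [arc, hinj.ncard_image]
  exact Set.ncard_Iio_nat m

variable [NeZero n]

theorem mem_arc_iff {u x : ZMod n} {m : ℕ} : x ∈ arc n u m ↔ (x - u).val < m := by
  constructor
  · rintro ⟨j, hj, rfl⟩
    rw [add_sub_cancel_left, ZMod.val_natCast]
    exact (Nat.mod_le _ _).trans_lt hj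
  · exact fun h => ⟨(x - u).val, h, by simp⟩

theorem add_natCast_mem_arc_iff {u : ZMod n} {j m : ℕ} (hj : j < n) :
    u + (j : ZMod n) ∈ arc n u m ↔ j < m := by
  rw [mem_arc_iff, add_sub_cancel_left, ZMod.val_natCast, Nat.mod_eq_of_lt hj]

theorem mem_arc_iff_lt_val_sub_last {u x : ZMod n} {m : ℕ} (hmn : m ≤ n) (hx : x ≠ u + (m - 1 : ℕ)) :
    x ∈ arc n u m ↔ n - m < (x - (u + (m - 1 : ℕ))).val := by
  set d := (x - (u + (m - 1 : ℕ))).val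
  have hd : 0 < d := by
    rw [Nat.pos_iff_ne_zero, Ne, ZMod.val_eq_zero, sub_eq_zero]
    exact hx
  have hdn : d < n := ZMod.val_lt _
  have hxu : x - u = ((d + (m - 1) : ℕ) : ZMod n) := by
    rw [Nat.cast_add, ZMod.natCast_zmod_val]
    ring
  rw [mem_arc_iff, hxu, ZMod.val_natCast]
  rcases lt_or_ge (d + (m - 1)) n with h | h
  · rw [Nat.mod_eq_of_lt h]
    omega
  · rw [Nat.mod_eq_sub_mod h, Nat.mod_eq_of_lt (by omega)]
    omega

end Arc

theorem degIn_add_degIn_compl {W : Type*} [Finite W] (G : SimpleGraph W) (S : Set W) (v : W) :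
    degIn G S v + degIn G Sᶜ v = (G.neighborSet v).ncard := by
  rw [degIn, degIn, Set.inter_comm, Set.inter_comm Sᶜ, ← Set.sdiff_eq,
    Set.ncard_inter_add_ncard_sdiff_eq_ncard _ _ (Set.toFinite _)]

section Hamiltonian

variable {n : ℕ} {G : SimpleGraph (ZMod n)}

theorem ZMod.add_one_ne_sub_one (hn : 3 ≤ n) (v : ZMod n) : v + 1 ≠ v - 1 := by
  intro h
  have h2 : ((2 : ℕ) : ZMod n) = 0 := by
    push_cast
    linear_combination h
  have := Nat.le_of_dvd two_pos ((ZMod.natCast_eq_zero_iff _ _).mp h2)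
  omega

theorem adj_sub_one (hcycle : ∀ i : ZMod n, G.Adj i (i + 1)) (v : ZMod n) : G.Adj v (v - 1) := by
  simpa using (hcycle (v - 1)).symm

theorem two_le_degIn_of_add_one_mem_of_sub_one_mem [NeZero n] (hn : 3 ≤ n)
    (hcycle : ∀ i : ZMod n, G.Adj i (i + 1)) {S : Set (ZMod n)} {v : ZMod n}
    (h₁ : v + 1 ∈ S) (h₂ : v - 1 ∈ S) : 2 ≤ degIn G S v := by
  calc 2 = ({v + 1, v - 1} : Set (ZMod n)).ncard := (Set.ncard_pair (v.add_one_ne_sub_one hn)).symm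
    _ ≤ degIn G S v := by
      refine Set.ncard_le_ncard ?_ (Set.toFinite _)
      rintro x (rfl | rfl)
      exacts [⟨h₁, hcycle v⟩, ⟨h₂, adj_sub_one hcycle v⟩]

theorem two_le_degIn_arc_of_isShift [NeZero n] (hcycle : ∀ i : ZMod n, G.Adj i (i + 1))
    {k' : ℕ} {u v : ZMod n} (h : IsShift n G k' u) (hv : v ∈ arc n u (n - k')) :
    2 ≤ degIn G (arc n u (n - k')) v := by
  obtain ⟨h₂, hk', hleft, hright⟩ := h
  obtain ⟨j, hj, rfl⟩ := hv
  change j < n - k' at hj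
  rcases (show j = 0 ∨ j = n - k' - 1 ∨ 0 < j ∧ j < n - k' - 1 by omega)
    with rfl | rfl | ⟨hj₀, hj₁⟩
  · simp [hleft]
  · exact hright.ge
  · refine two_le_degIn_of_add_one_mem_of_sub_one_mem (by omega) hcycle
      ⟨j + 1, by change j + 1 < n - k'; omega, by push_cast; ring⟩
      ⟨j - 1, by change j - 1 < n - k'; omega, by push_cast [Nat.cast_sub hj₀]; ring⟩

theorem isPDS_arc_of_isShift [NeZero n] (hcycle : ∀ i : ZMod n, G.Adj i (i + 1))
    (hcubic : ∀ v : ZMod n, (G.neighborSet v).ncard = 3) {k' : ℕ} {u : ZMod n}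
    (h : IsShift n G k' u) (hk' : 3 * (n - k') ≤ 2 * n + 1) : IsPDS G (arc n u (n - k')) := by
  have hkn : 2 ≤ k' ∧ k' ≤ n - 2 := ⟨h.1, h.2.1⟩
  set S := arc n u (n - k')
  have hS : S.ncard = n - k' := ncard_arc u (by omega)
  have hSc : Sᶜ.ncard = k' := by
    have := Set.ncard_add_ncard_compl S
    rw [hS, Nat.card_zmod] at this
    omega
  refine ⟨Set.ssubset_univ_iff.mpr fun hS' => ?_, by omega, fun v hv => ?_⟩
  · rw [hS', Set.ncard_univ, Nat.card_zmod] at hS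
    omega
  · have hin : 2 ≤ degIn G S v := two_le_degIn_arc_of_isShift hcycle h hv
    have hsum := degIn_add_degIn_compl G S v
    rw [hcubic] at hsum
    rw [hS, hSc]
    calc degIn G Sᶜ v * (n - k' - 1) ≤ 1 * (2 * k') := Nat.mul_le_mul (by omega) (by omega)
      _ ≤ degIn G S v * k' := by nlinarith

/-- `c i` is the paper's `c(i)`, the third neighbour of `i` besides `i ± 1`. -/
def IsChordMap (G : SimpleGraph (ZMod n)) (c : ZMod n → ZMod n) : Prop :=
  ∀ i, c i ≠ i + 1 ∧ c i ≠ i - 1 ∧ G.neighborSet i = {i + 1, i - 1, c i}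

theorem exists_isChordMap (hn : 3 ≤ n) (hcycle : ∀ i : ZMod n, G.Adj i (i + 1))
    (hcubic : ∀ v : ZMod n, (G.neighborSet v).ncard = 3) : ∃ c, IsChordMap G c := by
  have : NeZero n := ⟨by omega⟩
  suffices ∀ i, ∃ x, x ≠ i + 1 ∧ x ≠ i - 1 ∧ G.neighborSet i = {i + 1, i - 1, x} from
    ⟨fun i => (this i).choose, fun i => (this i).choose_spec⟩
  intro i
  have hsub : {i + 1, i - 1} ⊆ G.neighborSet i := by
    rintro x (rfl | rfl)
    exacts [hcycle i, adj_sub_one hcycle i]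
  have hdiff : (G.neighborSet i \ {i + 1, i - 1}).ncard = 1 := by
    rw [Set.ncard_sdiff hsub, hcubic, Set.ncard_pair (i.add_one_ne_sub_one hn)]
  obtain ⟨x, hx⟩ := Set.ncard_eq_one.mp hdiff
  have hxmem : x ∈ G.neighborSet i \ {i + 1, i - 1} := hx ▸ rfl
  simp only [Set.mem_sdiff, Set.mem_insert_iff, Set.mem_singleton_iff, not_or] at hxmem
  refine ⟨x, hxmem.2.1, hxmem.2.2, ?_⟩
  rw [← Set.sdiff_union_of_subset hsub, hx]
  ext y
  simp only [Set.mem_union, Set.mem_insert_iff, Set.mem_singleton_iff]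
  tauto

namespace IsChordMap

variable {c : ZMod n → ZMod n}

theorem adj (hc : IsChordMap G c) (i : ZMod n) : G.Adj i (c i) := by
  rw [← mem_neighborSet, (hc i).2.2]
  simp

theorem ne_self (hc : IsChordMap G c) (i : ZMod n) : c i ≠ i := (hc.adj i).ne'

theorem involutive (hc : IsChordMap G c) : Function.Involutive c := by
  intro i
  have hi : i ∈ G.neighborSet (c i) := (hc.adj i).symm
  rw [(hc (c i)).2.2] at hi
  rcases hi with h | h | h
  · exact absurd (eq_sub_of_add_eq h.symm) (hc i).2.1
  · exact absurd (eq_add_of_sub_eq h.symm) (hc i).1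
  · exact h.symm

theorem degIn_eq_two_iff (hc : IsChordMap G c) {S : Set (ZMod n)} {v : ZMod n}
    (hS : v + 1 ∈ S ↔ v - 1 ∉ S) :
    degIn G S v = 2 ↔ c v ∈ S := by
  obtain ⟨h₁, h₂, hN⟩ := hc v
  obtain ⟨w, hwc, heq⟩ : ∃ w, w ≠ c v ∧ S ∩ G.neighborSet v = insert w (S ∩ {c v}) := by
    by_cases hv : v + 1 ∈ S
    · refine ⟨v + 1, h₁.symm, ?_⟩
      rw [hN, Set.inter_insert_of_mem hv, Set.inter_insert_of_notMem (hS.mp hv)]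
    · have hv' : v - 1 ∈ S := by tauto
      refine ⟨v - 1, h₂.symm, ?_⟩
      rw [hN, Set.inter_insert_of_notMem hv, Set.inter_insert_of_mem hv']
  rw [degIn, heq, Set.ncard_insert_of_notMem (fun h => hwc h.2) (Set.toFinite _)]
  by_cases hcv : c v ∈ S <;> simp [hcv]

theorem isShift_iff [NeZero n] (hc : IsChordMap G c) {k' : ℕ} (h₂ : 2 ≤ k') (hk' : k' ≤ n - 2)
    (u : ZMod n) :
    IsShift n G k' u ↔ (c u - u).val < n - k' ∧
      k' < (c (u + (n - k' - 1 : ℕ)) - (u + (n - k' - 1 : ℕ))).val := by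
  set v := u + ((n - k' - 1 : ℕ) : ZMod n)
  have hmem : ∀ j, j < n → (u + (j : ZMod n) ∈ arc n u (n - k') ↔ j < n - k') :=
    fun j hj => add_natCast_mem_arc_iff hj
  have hleft : u + 1 ∈ arc n u (n - k') ↔ u - 1 ∉ arc n u (n - k') := by
    have h₁ := hmem 1 (by omega)
    have h₂ := hmem (n - 1) (by omega)
    rw [Nat.cast_sub (by omega), ZMod.natCast_self, zero_sub, ← sub_eq_add_neg,
      Nat.cast_one] at h₂
    rw [Nat.cast_one] at h₁
    rw [h₁, h₂]
    omega
  have hright : v + 1 ∈ arc n u (n - k') ↔ v - 1 ∉ arc n u (n - k') := by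
    have h₁ := hmem (n - k') (by omega)
    have h₂ := hmem (n - k' - 2) (by omega)
    rw [show u + ((n - k' : ℕ) : ZMod n) = v + 1 by
      simp only [v, Nat.cast_sub (show 1 ≤ n - k' by omega)]; ring] at h₁
    rw [show u + ((n - k' - 2 : ℕ) : ZMod n) = v - 1 by
      simp only [v, Nat.cast_sub (show 2 ≤ n - k' by omega),
        Nat.cast_sub (show 1 ≤ n - k' by omega)]; ring] at h₂
    rw [h₁, h₂]
    omega
  simp only [IsShift, h₂, hk', true_and]
  rw [hc.degIn_eq_two_iff hleft, hc.degIn_eq_two_iff hright, mem_arc_iff,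
    mem_arc_iff_lt_val_sub_last (by omega) (hc.ne_self v), Nat.sub_sub_self (by omega)]

end IsChordMap

end Hamiltonian

theorem IsChordMap.exists_isShift_of_three_mul {k : ℕ} (hk : 2 ≤ k)
    {G : SimpleGraph (ZMod (3 * k))} {c : ZMod (3 * k) → ZMod (3 * k)} (hc : IsChordMap G c) :
    ∃ u, IsShift (3 * k) G k u := by
  have : NeZero (3 * k) := ⟨by omega⟩
  obtain ⟨u, hu⟩ := ZMod.exists_val_sub_lt_and_lt_val_sub (by omega) hc.involutive hc.ne_self
  refine ⟨u, (hc.isShift_iff hk (by omega) u).mpr ?_⟩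
  rwa [show 3 * k - k = 2 * k by omega]

/-- Corollary (order `3k`): a Hamiltonian cubic graph on `n = 3k` vertices,
`k ≥ 2`, has a good shift, hence a PDS of size `⌊(2n+1)/3⌋ = 2k`.
(Here `⌈(n-1)/3⌉ = (n+1)/3` in natural number arithmetic.) -/
theorem good_shift_of_card_three_mul (n k : ℕ) (hk : 2 ≤ k) (hn : n = 3 * k)
    (G : SimpleGraph (ZMod n))
    (hcycle : ∀ i : ZMod n, G.Adj i (i + 1))
    (hcubic : ∀ v : ZMod n, (G.neighborSet v).ncard = 3) :
    (∃ u : ZMod n, IsShift n G ((n + 1) / 3) u) ∧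
      ∃ S : Set (ZMod n), IsPDS G S ∧ S.ncard = 2 * k := by
  subst hn
  have : NeZero (3 * k) := ⟨by omega⟩
  obtain ⟨c, hc⟩ := exists_isChordMap (by omega) hcycle hcubic
  obtain ⟨u, hu⟩ := hc.exists_isShift_of_three_mul hk
  rw [show (3 * k + 1) / 3 = k by omega]
  refine ⟨⟨u, hu⟩, _, isPDS_arc_of_isShift hcycle hcubic hu (by omega), ?_⟩
  rw [ncard_arc u (by omega)]
  omega
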